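/- Let A, B be bounded linear operators on a Banach space X and define the error e_i(t) = c_i(t) − c(t) of the iterative splitting scheme, where c(t) = exp(t(A+B))c₀. Then the errors satisfy the recursive integral relation e_i(t) = ∫₀ᵗ exp((t−s)D_i) E_i e_{i−1}(s) ds (for i ≥ 2, with (D_i,E_i) alternating between (A,B) and (B,A)), and consequently ‖e_i(t)‖ ≤ (K^{i-1} t^{i-1}/(i−1)!)·sup_{s∈[0,t]}‖e₁(s)‖ with K = max(‖A‖,‖B‖)e^{t·max(‖A‖,‖B‖)}. -/

import Mathlib

/-!
Since `D_i + E_i = A + B`, subtracting the exact equation from the `i`-th splitting equation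
gives `e_i' = D_i e_i + E_i e_{i-1}` with `e_i(0) = 0`, and variation of constants turns this
into the integral recursion. For the bound, `‖exp((t-s)D_i)‖ ≤ e^{t max(‖A‖,‖B‖)}` on `[0,t]`,
so one step of the recursion maps a bound `C s^n` to `K C t^{n+1}/(n+1)`; iterating from
`‖e₁‖ ≤ sup ‖e₁‖` produces `K^{i-1} t^{i-1}/(i-1)!`.
-/

open scoped Nat
open NormedSpace Set

section
variable {X : Type*} [NormedAddCommGroup X] [NormedSpace ℝ X]

theorem hasDerivAt_splitting_error {D E : X →L[ℝ] X} {u v w : ℝ → X} {t : ℝ}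
    (hu : HasDerivAt u (D (u t) + E (v t)) t) (hw : HasDerivAt w ((D + E) (w t)) t) :
    HasDerivAt (fun s => u s - w s) (D (u t - w t) + E (v t - w t)) t := by
  refine (hu.sub hw).congr_deriv ?_
  rw [map_sub, map_sub, add_apply]
  abel

variable [CompleteSpace X]

theorem norm_exp_le_exp_norm_clm (M : X →L[ℝ] X) : ‖exp M‖ ≤ Real.exp ‖M‖ := by
  refine (exp_series_hasSum_exp' (𝕂 := ℝ) M).norm_le_of_bounded
    (Real.exp_eq_exp_ℝ ▸ expSeries_div_hasSum_exp ‖M‖) fun n => ?_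
  rw [norm_smul, Real.norm_of_nonneg (by positivity), div_eq_inv_mul]
  gcongr
  rcases n.eq_zero_or_pos with rfl | hn
  · exact ContinuousLinearMap.norm_id_le
  · exact norm_pow_le' M hn

theorem norm_exp_smul_le {M : X →L[ℝ] X} {K r T : ℝ} (hM : ‖M‖ ≤ K) (hr : r ∈ Icc 0 T) :
    ‖exp (r • M)‖ ≤ Real.exp (T * K) := by
  refine (norm_exp_le_exp_norm_clm _).trans (Real.exp_le_exp.2 ?_)
  rw [norm_smul, Real.norm_of_nonneg hr.1]
  exact mul_le_mul hr.2 hM (norm_nonneg _) (hr.1.trans hr.2)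

theorem hasDerivAt_exp_smul_apply (M : X →L[ℝ] X) (x : X) (t : ℝ) :
    HasDerivAt (fun t : ℝ => exp (t • M) x) (M (exp (t • M) x)) t := by
  simpa using (hasDerivAt_exp_smul_const' M t).clm_apply (hasDerivAt_const t x)

theorem hasDerivAt_exp_neg_smul_apply {M : X →L[ℝ] X} {u : ℝ → X} {f : X} {s : ℝ}
    (hu : HasDerivAt u (M (u s) + f) s) :
    HasDerivAt (fun r : ℝ => exp (r • -M) (u r)) (exp (s • -M) f) s := by
  have hcomm : Commute M (exp (s • -M)) := ((Commute.refl M).neg_right.smul_right s).exp_right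
  have hMexp : M (exp (s • -M) (u s)) = exp (s • -M) (M (u s)) := by
    rw [← mul_apply_eq_comp, hcomm.eq, mul_apply_eq_comp]
  convert (hasDerivAt_exp_smul_const' (-M) s).clm_apply hu using 1
  rw [neg_mul, neg_apply, mul_apply_eq_comp, map_add, hMexp]
  abel

theorem eq_integral_exp_smul_of_hasDerivAt (M : X →L[ℝ] X) {f u : ℝ → X} (hf : Continuous f)
    (hu0 : u 0 = 0) (hu : ∀ t, HasDerivAt u (M (u t) + f t) t) (t : ℝ) :
    u t = ∫ s in (0:ℝ)..t, exp ((t - s) • M) (f s) := by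
  -- `exp_add_of_commute` and `exp_continuous` are stated for `ℚ`-algebras, which instance
  -- search does not find for `X →L[ℝ] X`.
  let _ : NormedAlgebra ℚ (X →L[ℝ] X) := .restrictScalars ℚ ℝ _
  have hcomm (a b : ℝ) : Commute (a • M) (b • -M) :=
    ((Commute.refl M).neg_right.smul_left a).smul_right b
  have hint : IntervalIntegrable (fun s => exp (s • -M) (f s)) MeasureTheory.volume 0 t :=
    ((exp_continuous.comp (continuous_id.smul continuous_const)).clm_apply hf).intervalIntegrable
      _ _
  have hFTC : ∫ s in (0:ℝ)..t, exp (s • -M) (f s) = exp (t • -M) (u t) := by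
    rw [intervalIntegral.integral_eq_sub_of_hasDerivAt
      (fun s _ => hasDerivAt_exp_neg_smul_apply (hu s)) hint]
    simp [hu0]
  calc u t = exp (t • M) (exp (t • -M) (u t)) := by
        rw [← mul_apply_eq_comp, ← exp_add_of_commute (hcomm t t), smul_neg,
          add_neg_cancel, exp_zero, one_apply_eq_self]
    _ = ∫ s in (0:ℝ)..t, exp (t • M) (exp (s • -M) (f s)) := by
        rw [← hFTC, (exp (t • M)).intervalIntegral_comp_comm hint]
    _ = ∫ s in (0:ℝ)..t, exp ((t - s) • M) (f s) := by
        refine intervalIntegral.integral_congr fun s _ => ?_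
        rw [sub_smul, sub_eq_add_neg, ← smul_neg, exp_add_of_commute (hcomm t s),
          mul_apply_eq_comp]

theorem norm_integral_exp_smul_apply_le {M N : X →L[ℝ] X} {g : ℝ → X} {K T t C : ℝ} (n : ℕ)
    (hM : ‖M‖ ≤ K) (hN : ‖N‖ ≤ K) (ht : t ∈ Icc 0 T) (hg : ∀ s ∈ Ioc 0 t, ‖g s‖ ≤ C * s ^ n) :
    ‖∫ s in (0:ℝ)..t, exp ((t - s) • M) (N (g s))‖ ≤
      K * Real.exp (T * K) * C * (t ^ (n + 1) / (n + 1)) := by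
  have hK : 0 ≤ K := (norm_nonneg _).trans hN
  have hpoint : ∀ s ∈ Ioc 0 t,
      ‖exp ((t - s) • M) (N (g s))‖ ≤ K * Real.exp (T * K) * C * s ^ n := fun s hs =>
    calc ‖exp ((t - s) • M) (N (g s))‖ ≤ ‖exp ((t - s) • M)‖ * (‖N‖ * ‖g s‖) :=
          (ContinuousLinearMap.le_opNorm _ _).trans (by gcongr; exact N.le_opNorm _)
      _ ≤ Real.exp (T * K) * (K * (C * s ^ n)) := by
          gcongr
          exacts [norm_exp_smul_le hM ⟨by linarith [hs.2], by linarith [hs.1, ht.2]⟩, hg s hs]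
      _ = K * Real.exp (T * K) * C * s ^ n := by ring
  calc _ ≤ ∫ s in (0:ℝ)..t, K * Real.exp (T * K) * C * s ^ n :=
        intervalIntegral.norm_integral_le_of_norm_le ht.1 (.of_forall hpoint)
          (((continuous_pow n).const_mul _).intervalIntegrable _ _)
    _ = K * Real.exp (T * K) * C * (t ^ (n + 1) / (n + 1)) := by
        rw [intervalIntegral.integral_const_mul, integral_pow]
        simp

theorem norm_le_of_iterated_integral_exp {D E : ℕ → X →L[ℝ] X} {f : ℕ → ℝ → X} {K T S : ℝ}
    (hD : ∀ n, ‖D n‖ ≤ K) (hE : ∀ n, ‖E n‖ ≤ K)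
    (hf : ∀ n, ∀ t ∈ Icc 0 T, f (n + 1) t = ∫ s in (0:ℝ)..t, exp ((t - s) • D n) (E n (f n s)))
    (hf0 : ∀ t ∈ Icc 0 T, ‖f 0 t‖ ≤ S) (n : ℕ) :
    ∀ t ∈ Icc 0 T, ‖f n t‖ ≤ (K * Real.exp (T * K)) ^ n * t ^ n / n ! * S := by
  induction n with
  | zero => simpa using hf0
  | succ n ih =>
    intro t ht
    rw [hf n t ht]
    refine (norm_integral_exp_smul_apply_le (C := (K * Real.exp (T * K)) ^ n / n ! * S) n
      (hD n) (hE n) ht fun s hs => ?_).trans_eq ?_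
    · exact (ih s ⟨hs.1.le, hs.2.trans ht.2⟩).trans_eq (by ring)
    · rw [Nat.factorial_succ]
      push_cast
      field_simp
      ring

end

/-- Error recursion and bound for the iterative splitting scheme: with
`e_i = c_i − c`, `e_i(t) = ∫₀ᵗ exp((t−s)D_i) E_i e_{i−1}(s) ds` and
`‖e_i(t)‖ ≤ K^{i−1} t^{i−1}/(i−1)! · sup_{s∈[0,t]} ‖e₁(s)‖` with
`K = max(‖A‖,‖B‖) e^{t max(‖A‖,‖B‖)}`. -/
theorem splitting_error_recursion {X : Type*} [NormedAddCommGroup X]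
    [NormedSpace ℝ X] [CompleteSpace X] (A B : X →L[ℝ] X) (c₀ : X)
    (D E : ℕ → (X →L[ℝ] X))
    (hD : ∀ i, D i = if Even i then B else A)
    (hE : ∀ i, E i = if Even i then A else B)
    (c : ℕ → ℝ → X)
    (hinit : ∀ i, 1 ≤ i → c i 0 = c₀)
    (hc1 : ∀ t : ℝ, HasDerivAt (c 1) (A (c 1 t)) t)
    (hode : ∀ i, 2 ≤ i → ∀ t : ℝ,
      HasDerivAt (c i) ((D i) (c i t) + (E i) (c (i - 1) t)) t)
    (cexact : ℝ → X) (hcexact : ∀ t, cexact t = (NormedSpace.exp (t • (A + B))) c₀)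
    (e : ℕ → ℝ → X) (he : ∀ i t, e i t = c i t - cexact t) :
    (∀ i, 2 ≤ i → ∀ t : ℝ, 0 ≤ t →
        e i t = ∫ s in (0:ℝ)..t, (NormedSpace.exp ((t - s) • D i)) ((E i) (e (i - 1) s))) ∧
      ∀ i, 1 ≤ i → ∀ t : ℝ, 0 ≤ t →
        ‖e i t‖ ≤
          (max ‖A‖ ‖B‖ * Real.exp (t * max ‖A‖ ‖B‖)) ^ (i - 1) * t ^ (i - 1) /
              (i - 1)! *
            ⨆ s : Set.Icc (0:ℝ) t, ‖e 1 s‖ := by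
  have hexact (t : ℝ) : HasDerivAt cexact ((A + B) (cexact t)) t := by
    simpa only [← hcexact] using hasDerivAt_exp_smul_apply (A + B) c₀ t
  have hDE (i : ℕ) : D i + E i = A + B := by
    rw [hD, hE]; split_ifs <;> simp [add_comm]
  have hcont : ∀ i, 1 ≤ i → Continuous (e i) := by
    intro i hi
    have hci : Continuous (c i) := continuous_iff_continuousAt.2 fun t => by
      rcases hi.eq_or_lt with rfl | hi
      exacts [(hc1 t).continuousAt, (hode i hi t).continuousAt]
    exact funext (he i) ▸ hci.sub (continuous_iff_continuousAt.2 fun t => (hexact t).continuousAt)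
  have hrec : ∀ i, 2 ≤ i → ∀ t : ℝ,
      e i t = ∫ s in (0:ℝ)..t, exp ((t - s) • D i) (E i (e (i - 1) s)) := fun i hi =>
    eq_integral_exp_smul_of_hasDerivAt (D i) ((E i).continuous.comp (hcont (i - 1) (by omega)))
      (by simp [he, hinit i (by omega), hcexact]) fun t => by
        simp only [funext (he i), he]
        exact hasDerivAt_splitting_error (hode i hi t) (hDE i ▸ hexact t)
  refine ⟨fun i hi t _ => hrec i hi t, fun i hi t ht => ?_⟩
  obtain ⟨n, rfl⟩ : ∃ n, i = n + 1 := ⟨i - 1, by omega⟩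
  have hnorm (i : ℕ) : ‖D i‖ ≤ max ‖A‖ ‖B‖ ∧ ‖E i‖ ≤ max ‖A‖ ‖B‖ := by
    rw [hD, hE]; split_ifs <;> simp
  have hsup : ∀ s ∈ Icc 0 t, ‖e 1 s‖ ≤ ⨆ r : Icc (0:ℝ) t, ‖e 1 r‖ := fun s hs =>
    le_ciSup (isCompact_range ((hcont 1 le_rfl).norm.comp continuous_subtype_val)).bddAbove
      (⟨s, hs⟩ : Icc (0:ℝ) t)
  simpa using norm_le_of_iterated_integral_exp (f := fun n => e (n + 1))
    (fun n => (hnorm (n + 2)).1) (fun n => (hnorm (n + 2)).2)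
    (fun n s _ => hrec (n + 2) (by omega) s) hsup n t ⟨ht, le_rfl⟩
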